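/- Let u, w ∈ M_n(ℂ) be complex Hadamard matrices. Define u₁ := (I_n ⊗ u)D_u, u₂ := u₁(u ⊗ I_n), w₁ := (I_n ⊗ w)D_w, and V₀ := Σ_{i,j=1}^n E_{ij} ⊗ E_{ji} (the flip). Then BU(u,w;0) := u₂·w₁·V₀ ∈ M_n(ℂ) ⊗ M_n(ℂ) is a biunitary matrix: both it and its block transpose are unitary. -/

import Mathlib

open Matrix Kronecker

/-- A complex Hadamard matrix of order `n`. -/
def IsCHM {n : ℕ} (u : Matrix (Fin n) (Fin n) ℂ) : Prop :=
  u ∈ Matrix.unitaryGroup (Fin n) ℂ ∧ ∀ i j, ‖u i j‖ = 1 / Real.sqrt n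

/-- `D_u := √n · Σ_{i,j} conj(u_{ij}) (E_{ii} ⊗ E_{jj})`. -/
noncomputable def Du {n : ℕ} (u : Matrix (Fin n) (Fin n) ℂ) :
    Matrix (Fin n × Fin n) (Fin n × Fin n) ℂ :=
  ((Real.sqrt n : ℝ) : ℂ) •
    ∑ i : Fin n, ∑ j : Fin n, (starRingEnd ℂ) (u i j) •
      (Matrix.single i i (1 : ℂ) ⊗ₖ Matrix.single j j (1 : ℂ))

/-- The block transpose: `x̃_{αa}^{βb} := x_{βa}^{αb}`. -/
def blockTranspose {n : ℕ} (x : Matrix (Fin n × Fin n) (Fin n × Fin n) ℂ) :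
    Matrix (Fin n × Fin n) (Fin n × Fin n) ℂ :=
  fun p q => x (q.1, p.2) (p.1, q.2)

/-- The flip `V₀ := Σ_{i,j} E_{ij} ⊗ E_{ji}`. -/
noncomputable def V0 (n : ℕ) : Matrix (Fin n × Fin n) (Fin n × Fin n) ℂ :=
  ∑ i : Fin n, ∑ j : Fin n,
    Matrix.single i j (1 : ℂ) ⊗ₖ Matrix.single j i (1 : ℂ)

/-!
Entrywise, `BU(u,w;0)_{(a,b),(g,h)} = √n conj(w_{hg}) · u_{ah} · (u · diag(√n conj u_{a•}) · w)_{bg}`,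
and its block transpose has the same shape with `√n u_{gh}`, `(w*)_{ah}` and
`(u · diag(√n w_{•a}) · u*)_{bg}`: a unimodular phase `φ_{gh}` (this is where the Hadamard
condition enters), times `X_{ah}` with `X` unitary, times `(Y_a)_{bg}` with each `Y_a` a product of
three unitaries. Any such matrix is unitary: the phases cancel in the inner product of two rows,
which then factors into inner products of rows of `X` and of `Y_a`.
-/

lemma RCLike.mem_unitary_of_norm_eq_one {𝕜 : Type*} [RCLike 𝕜] {z : 𝕜} (hz : ‖z‖ = 1) :
    z ∈ unitary 𝕜 := by
  rw [Unitary.mem_iff_star_mul_self, RCLike.star_def, RCLike.conj_mul, hz]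
  simp

lemma Matrix.mul_kronecker_one_apply {ι R : Type*} [Fintype ι] [DecidableEq ι] [Semiring R]
    (M : Matrix (ι × ι) (ι × ι) R) (x : Matrix ι ι R) (p : ι × ι) (c d : ι) :
    (M * (x ⊗ₖ (1 : Matrix ι ι R))) p (c, d) = ∑ e, M p (e, d) * x e c := by
  simp [mul_apply, Fintype.sum_prod_type, one_apply]

namespace Matrix

variable {ι R : Type*} [Fintype ι] [DecidableEq ι] [CommRing R] [StarRing R]

lemma diagonal_mem_unitaryGroup {d : ι → R} (hd : ∀ i, d i ∈ unitary R) :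
    diagonal d ∈ unitaryGroup ι R := by
  rw [mem_unitaryGroup_iff, star_eq_conjTranspose, diagonal_conjTranspose, diagonal_mul_diagonal,
    ← diagonal_one]
  exact congrArg diagonal (funext fun i => Unitary.mul_star_self_of_mem (hd i))

lemma sum_mul_star_eq_one_apply {A : Matrix ι ι R} (hA : A ∈ unitaryGroup ι R) (i j : ι) :
    ∑ k, A i k * star (A j k) = (1 : Matrix ι ι R) i j := by
  rw [← mem_unitaryGroup_iff.1 hA, mul_apply]
  rfl

theorem mem_unitaryGroup_of_apply_eq_mul {M : Matrix (ι × ι) (ι × ι) R} {φ : ι → ι → R}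
    {X : Matrix ι ι R} {Y : ι → Matrix ι ι R} (hφ : ∀ g h, φ g h ∈ unitary R)
    (hX : X ∈ unitaryGroup ι R) (hY : ∀ a, Y a ∈ unitaryGroup ι R)
    (hM : ∀ a b g h, M (a, b) (g, h) = φ g h * X a h * Y a b g) :
    M ∈ unitaryGroup (ι × ι) R := by
  rw [mem_unitaryGroup_iff]
  ext ⟨a, b⟩ ⟨a', b'⟩
  calc (M * star M) (a, b) (a', b')
      = ∑ g, ∑ h, (X a h * star (X a' h)) * (Y a b g * star (Y a' b' g)) := by
        rw [mul_apply, Fintype.sum_prod_type]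
        refine Finset.sum_congr rfl fun g _ => Finset.sum_congr rfl fun h _ => ?_
        have hφgh := Unitary.star_mul_self_of_mem (hφ g h)
        rw [star_apply, hM, hM, star_mul', star_mul']
        linear_combination (X a h * star (X a' h)) * (Y a b g * star (Y a' b' g)) * hφgh
    _ = (∑ h, X a h * star (X a' h)) * ∑ g, Y a b g * star (Y a' b' g) := by
        rw [Finset.sum_mul_sum, Finset.sum_comm]
    _ = (1 : Matrix (ι × ι) (ι × ι) R) (a, b) (a', b') := by
        rw [sum_mul_star_eq_one_apply hX]
        obtain rfl | ha := eq_or_ne a a'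
        · simp [sum_mul_star_eq_one_apply (hY a), one_apply]
        · simp [ha]

end Matrix

section Hadamard

variable {n : ℕ} {u w : Matrix (Fin n) (Fin n) ℂ}

lemma IsCHM.sqrt_mul_mem_unitary (hu : IsCHM u) (i j : Fin n) :
    (Real.sqrt n : ℂ) * u i j ∈ unitary ℂ := by
  have hn : Real.sqrt n ≠ 0 := by simpa using i.pos.ne'
  refine RCLike.mem_unitary_of_norm_eq_one ?_
  rw [norm_mul, hu.2, Complex.norm_real, Real.norm_of_nonneg (Real.sqrt_nonneg _),
    mul_one_div_cancel hn]

lemma IsCHM.sqrt_mul_star_mem_unitary (hu : IsCHM u) (i j : Fin n) :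
    (Real.sqrt n : ℂ) * star (u i j) ∈ unitary ℂ := by
  simpa [mul_comm] using Unitary.star_mem (hu.sqrt_mul_mem_unitary i j)

lemma Du_eq_diagonal (u : Matrix (Fin n) (Fin n) ℂ) :
    Du u = diagonal fun p => (Real.sqrt n : ℂ) * star (u p.1 p.2) := by
  ext ⟨a, b⟩ ⟨c, d⟩
  simp only [Du, single, ite_and, Matrix.smul_apply, Matrix.sum_apply, kroneckerMap_apply,
    of_apply, mul_ite, mul_one, mul_zero, smul_eq_mul, Finset.sum_ite_eq', Finset.mem_univ,
    ↓reduceIte, Finset.sum_ite_irrel, Finset.sum_const_zero, RCLike.star_def, diagonal_apply,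
    Prod.ext_iff]
  split_ifs <;> simp_all

lemma V0_eq_submatrix_one :
    V0 n = (1 : Matrix (Fin n × Fin n) (Fin n × Fin n) ℂ).submatrix (Equiv.prodComm _ _) id := by
  ext ⟨a, b⟩ ⟨c, d⟩
  simp only [V0, single, ite_and, Matrix.sum_apply, kroneckerMap_apply, of_apply, mul_ite,
    mul_one, mul_zero, Finset.sum_ite_eq', Finset.mem_univ, ↓reduceIte, Equiv.coe_prodComm,
    submatrix_apply, one_apply, Prod.swap_prod_mk, id_eq, Prod.ext_iff]
  split_ifs <;> simp_all

lemma one_kronecker_mul_Du_apply (u : Matrix (Fin n) (Fin n) ℂ) (a b c d : Fin n) :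
    (((1 : Matrix (Fin n) (Fin n) ℂ) ⊗ₖ u) * Du u) (a, b) (c, d) =
      if a = c then u b d * ((Real.sqrt n : ℂ) * star (u c d)) else 0 := by
  simp [Du_eq_diagonal, one_apply]

noncomputable def BU (u w : Matrix (Fin n) (Fin n) ℂ) :
    Matrix (Fin n × Fin n) (Fin n × Fin n) ℂ :=
  (((1 : Matrix (Fin n) (Fin n) ℂ) ⊗ₖ u) * Du u * (u ⊗ₖ (1 : Matrix (Fin n) (Fin n) ℂ))) *
    (((1 : Matrix (Fin n) (Fin n) ℂ) ⊗ₖ w) * Du w) * V0 n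

lemma BU_apply (u w : Matrix (Fin n) (Fin n) ℂ) (a b g h : Fin n) :
    BU u w (a, b) (g, h) = (Real.sqrt n : ℂ) * star (w h g) * u a h *
      (u * diagonal (fun f => (Real.sqrt n : ℂ) * star (u a f)) * w) b g := by
  rw [BU, V0_eq_submatrix_one, mul_submatrix_one]
  simp only [submatrix_apply, id_eq, Function.comp_apply, Equiv.prodComm_symm,
    Equiv.prodComm_apply, Prod.swap_prod_mk]
  rw [mul_apply]
  simp only [Fintype.sum_prod_type, mul_kronecker_one_apply, one_kronecker_mul_Du_apply, ite_mul,
    zero_mul, Finset.sum_ite_eq, Finset.mem_univ, if_true]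
  rw [Finset.sum_comm, mul_apply]
  simp only [mul_ite, mul_zero, Finset.sum_ite_eq', Finset.mem_univ, if_true, mul_diagonal,
    Finset.mul_sum]
  exact Finset.sum_congr rfl fun f _ => by ring

lemma BU_mem_unitaryGroup (hu : IsCHM u) (hw : IsCHM w) :
    BU u w ∈ unitaryGroup (Fin n × Fin n) ℂ :=
  mem_unitaryGroup_of_apply_eq_mul (fun g h => hw.sqrt_mul_star_mem_unitary h g) hu.1
    (fun a => mul_mem (mul_mem hu.1
      (diagonal_mem_unitaryGroup fun f => hu.sqrt_mul_star_mem_unitary a f)) hw.1)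
    (BU_apply u w)

lemma blockTranspose_BU_mem_unitaryGroup (hu : IsCHM u) (hw : IsCHM w) :
    blockTranspose (BU u w) ∈ unitaryGroup (Fin n × Fin n) ℂ := by
  refine mem_unitaryGroup_of_apply_eq_mul (φ := fun g h => (Real.sqrt n : ℂ) * u g h)
    (X := star w) (Y := fun a => u * diagonal (fun f => (Real.sqrt n : ℂ) * w f a) * star u)
    (fun g h => hu.sqrt_mul_mem_unitary g h) (Unitary.star_mem hw.1)
    (fun a => mul_mem (mul_mem hu.1
      (diagonal_mem_unitaryGroup fun f => hw.sqrt_mul_mem_unitary f a)) (Unitary.star_mem hu.1))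
    fun a b g h => ?_
  rw [blockTranspose, BU_apply, mul_apply, mul_apply]
  simp only [mul_diagonal, star_apply, Finset.mul_sum]
  exact Finset.sum_congr rfl fun f _ => by ring

end Hadamard

/-- For complex Hadamard matrices `u, w` of order `n`, the matrix
`BU(u,w;0) := u₂·w₁·V₀` (with `u₁ = (I⊗u)D_u`, `u₂ = u₁(u⊗I)`, `w₁ = (I⊗w)D_w`)
is biunitary: both it and its block transpose are unitary. -/
theorem stmt14 (n : ℕ) (u w : Matrix (Fin n) (Fin n) ℂ)
    (hu : IsCHM u) (hw : IsCHM w)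
    (B : Matrix (Fin n × Fin n) (Fin n × Fin n) ℂ)
    (hB : B = (((1 : Matrix (Fin n) (Fin n) ℂ) ⊗ₖ u) * Du u *
        (u ⊗ₖ (1 : Matrix (Fin n) (Fin n) ℂ))) *
      (((1 : Matrix (Fin n) (Fin n) ℂ) ⊗ₖ w) * Du w) * V0 n) :
    B ∈ Matrix.unitaryGroup (Fin n × Fin n) ℂ ∧
      blockTranspose B ∈ Matrix.unitaryGroup (Fin n × Fin n) ℂ := by
  subst hB
  exact ⟨BU_mem_unitaryGroup hu hw, blockTranspose_BU_mem_unitaryGroup hu hw⟩
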